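/- arXiv:2309.12522 — 6 statements merged into one kernel-verified Lean document; each statement's English description precedes it below -/
import Mathlib

section
/- For all integers n ≥ 2 and all rational numbers a > 1, one has a^{n+1} - (a+n)(a-1)^n > 0. -/
/-- For all integers `n ≥ 2` and all rational `a > 1`, one has
`a^(n+1) - (a+n)(a-1)^n > 0`. -/
theorem stmt_0 (n : ℕ) (hn : 2 ≤ n) (a : ℚ) (ha : 1 < a) :
    0 < a ^ (n + 1) - (a + n) * (a - 1) ^ n := by
  induction n, hn using Nat.le_induction with
  | base => push_cast; nlinarith [sq_nonneg (a - 1)]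
  | succ n hn ih =>
    have hb : (0:ℚ) < (a - 1) ^ n := pow_pos (by linarith) n
    have h1 : (a + n) * (a - 1) ^ n < a ^ (n + 1) := by linarith
    push_cast
    have : (a + (n + 1)) * (a - 1) ^ (n + 1)
        = (a + n + 1) * (a - 1) * (a - 1) ^ n := by ring
    rw [this]
    have h2 : (a + n + 1) * (a - 1) * (a - 1) ^ n
        ≤ a * ((a + n) * (a - 1) ^ n) := by
      have : (a + n + 1) * (a - 1) ≤ a * (a + n) := by
        have : (0:ℚ) ≤ (n:ℚ) := Nat.cast_nonneg n
        nlinarith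
      nlinarith
    have h3 : a * ((a + n) * (a - 1) ^ n) < a * a ^ (n + 1) :=
      mul_lt_mul_of_pos_left h1 (by linarith)
    have : a * a ^ (n + 1) = a ^ (n + 1 + 1) := by ring
    linarith
end

section
/- For all integers n ≥ 2 and all real numbers a ≥ 1, the quantity Res_n(a) = (a^{n+1} - (a+n)(a-1)^n) / (2(n+1)(a^n - (a-1)^n)) is strictly positive. -/
lemma num_pos (n : ℕ) (hn : 2 ≤ n) (a : ℝ) (ha : 1 ≤ a) :
    0 < a ^ (n + 1) - (a + n) * (a - 1) ^ n := by
  induction n with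
  | zero => omega
  | succ m ih =>
    rcases Nat.lt_or_ge m 2 with hm | hm
    · interval_cases m
      · omega
      · push_cast
        nlinarith [sq_nonneg (a - 1), sq_nonneg a]
    · have h := ih (by omega)
      have hpow : (0:ℝ) ≤ (a - 1) ^ m := pow_nonneg (by linarith) m
      have key : (a + m + 1) * (a - 1) ≤ a * (a + m) := by nlinarith
      push_cast
      have heq : (a + (m+1)) * (a - 1) ^ (m + 1)
          = ((a + m + 1) * (a - 1)) * (a - 1) ^ m := by ring
      rw [heq]
      have h2 : ((a + m + 1) * (a - 1)) * (a - 1) ^ m ≤ (a * (a + m)) * (a - 1) ^ m :=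
        mul_le_mul_of_nonneg_right key hpow
      have h3 : a * ((a + m) * (a - 1) ^ m) < a * a ^ (m + 1) := by
        apply mul_lt_mul_of_pos_left (by linarith) (by linarith)
      have : a * a ^ (m + 1) = a ^ (m + 1 + 1) := by ring
      nlinarith

/-- For all integers `n ≥ 2` and real `a ≥ 1`, the quantity
`Res_n(a) = (a^(n+1) - (a+n)(a-1)^n) / (2(n+1)(a^n - (a-1)^n))` is strictly positive. -/
theorem stmt_1 (n : ℕ) (hn : 2 ≤ n) (a : ℝ) (ha : 1 ≤ a) :
    0 < (a ^ (n + 1) - (a + n) * (a - 1) ^ n) /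
        (2 * (n + 1) * (a ^ n - (a - 1) ^ n)) := by
  have hnum := num_pos n hn a ha
  have hden : (a - 1) ^ n < a ^ n :=
    pow_lt_pow_left₀ (by linarith) (by linarith) (by omega)
  have : (0:ℝ) < 2 * (n + 1) * (a ^ n - (a - 1) ^ n) := by
    have : (0:ℝ) < (n:ℝ) + 1 := by positivity
    nlinarith
  exact div_pos hnum this
end

section
/- Let n and r be integers with n > r > n/2 > 1. Then (n^n - (r+1)(n-r)^n) · (2r - n) > 0; equivalently, n^n > (r+1)(n-r)^n. -/
/-! Since `r + 1 ≤ n < 2 ^ n` and `2 (n - r) ≤ n - 1`, we get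
`(r + 1) (n - r) ^ n < (2 (n - r)) ^ n ≤ (n - 1) ^ n < n ^ n`. -/

theorem Nat.succ_mul_sub_pow_self_lt_pow_self {n r : ℕ} (h2r : n < 2 * r) (hrn : r < n) :
    (r + 1) * (n - r) ^ n < n ^ n :=
  calc (r + 1) * (n - r) ^ n ≤ n * (n - r) ^ n := Nat.mul_le_mul_right _ hrn
    _ < 2 ^ n * (n - r) ^ n := Nat.mul_lt_mul_of_pos_right n.lt_two_pow_self
      (pow_pos (Nat.sub_pos_of_lt hrn) n)
    _ = (2 * (n - r)) ^ n := (mul_pow _ _ _).symm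
    _ ≤ (n - 1) ^ n := Nat.pow_le_pow_left (by omega) n
    _ < n ^ n := Nat.pow_lt_pow_left (by omega) (by omega)

theorem Int.succ_mul_sub_pow_self_lt_pow_self {n r : ℕ} (h2r : n < 2 * r) (hrn : r < n) :
    ((r : ℤ) + 1) * ((n : ℤ) - r) ^ n < (n : ℤ) ^ n := by
  have h := Nat.succ_mul_sub_pow_self_lt_pow_self h2r hrn
  zify [hrn.le] at h
  exact h

theorem stmt_2_general (n r : ℕ) (h2 : (n : ℚ) / 2 < r) (h3 : r < n) :
    0 < ((n : ℤ) ^ n - ((r : ℤ) + 1) * ((n : ℤ) - (r : ℤ)) ^ n) * (2 * (r : ℤ) - (n : ℤ)) ∧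
      ((r : ℤ) + 1) * ((n : ℤ) - (r : ℤ)) ^ n < (n : ℤ) ^ n := by
  have h2r : n < 2 * r := by exact_mod_cast (by linarith : (n : ℚ) < 2 * r)
  have key := Int.succ_mul_sub_pow_self_lt_pow_self h2r h3
  exact ⟨mul_pos (sub_pos.mpr key) (by omega), key⟩

/-- For integers `n > r > n/2 > 1`, one has
`(n^n - (r+1)(n-r)^n) · (2r - n) > 0`; equivalently `n^n > (r+1)(n-r)^n`. -/
theorem stmt_2 (n r : ℕ) (h1 : (1 : ℚ) < (n : ℚ) / 2) (h2 : (n : ℚ) / 2 < r) (h3 : r < n) :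
    0 < ((n : ℤ) ^ n - ((r : ℤ) + 1) * ((n : ℤ) - (r : ℤ)) ^ n) * (2 * (r : ℤ) - (n : ℤ)) ∧
      ((r : ℤ) + 1) * ((n : ℤ) - (r : ℤ)) ^ n < (n : ℤ) ^ n :=
  stmt_2_general n r h2 h3
end

section
/- Let n ≥ 2 be an integer and let a = n/r where n, r are integers with 1 < n/2 < r < n. Define k_n(a, d, μ) = ((2dμ^{n-2}+1)a^{n+1} - (a+n)(a-1)^n - 2dμ^{n-2}(a-1)^{n+1}) / (2(n+1)(a^n - (a-1)^n)) with d = r^{n-1} and μ = 1/r. Then k_n(a,d,μ) < 1. -/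
/-!
With `a = n / r` one has `2 d μ^(n-2) = 2r`, and clearing the denominator shows that the
defect `1 - k_n` is a positive multiple of `(2 - a) (a^n - (r + 1) (a - 1)^n)`.
Both factors are positive: `a < 2` because `n < 2r`, and `(r + 1) (a - 1)^n < a^n`
because `r + 1 ≤ n < 2^n` while `2 (a - 1) < a`.
-/

theorem kn_denominator_sub_numerator_eq {R : Type*} [CommRing R] {n : ℕ} {a r : R}
    (hn : (n : R) = a * r) :
    2 * ((n : R) + 1) * (a ^ n - (a - 1) ^ n)
        - ((2 * r + 1) * a ^ (n + 1) - (a + n) * (a - 1) ^ n - 2 * r * (a - 1) ^ (n + 1))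
      = (2 - a) * (a ^ n - (r + 1) * (a - 1) ^ n) := by
  linear_combination (2 * a ^ n - (a - 1) ^ n) * hn

theorem mul_sub_one_pow_lt_pow {R : Type*} [CommRing R] [LinearOrder R] [IsStrictOrderedRing R]
    {n : ℕ} {a c : R} (ha₁ : 1 < a) (ha₂ : a < 2) (hc : c < 2 ^ n) :
    c * (a - 1) ^ n < a ^ n :=
  calc c * (a - 1) ^ n < 2 ^ n * (a - 1) ^ n :=
        mul_lt_mul_of_pos_right hc (pow_pos (by linarith) n)
    _ = (2 * (a - 1)) ^ n := (mul_pow _ _ _).symm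
    _ ≤ a ^ n := pow_le_pow_left₀ (by linarith) (by linarith) n

theorem stmt_3_general (n r : ℕ)
    (h2 : (n : ℚ) / 2 < r) (h3 : r < n)
    (a d μ : ℚ) (ha : a = (n : ℚ) / r) (hd : d = (r : ℚ) ^ (n - 1)) (hμ : μ = 1 / (r : ℚ)) :
    ((2 * d * μ ^ (n - 2) + 1) * a ^ (n + 1) - (a + n) * (a - 1) ^ n
        - 2 * d * μ ^ (n - 2) * (a - 1) ^ (n + 1)) /
      (2 * ((n : ℚ) + 1) * (a ^ n - (a - 1) ^ n)) < 1 := by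
  have hn₂ : (n : ℚ) < 2 * r := by linarith
  have hnr : n < 2 * r := by exact_mod_cast hn₂
  have hr : (0 : ℚ) < r := by exact_mod_cast (by omega : 0 < r)
  have hrn : (r : ℚ) < n := by exact_mod_cast h3
  have ha₁ : 1 < a := by rw [ha, one_lt_div hr]; exact hrn
  have ha₂ : a < 2 := by rw [ha, div_lt_iff₀ hr]; exact hn₂
  have hna : (n : ℚ) = a * r := by rw [ha]; field_simp
  have hdμ : d * μ ^ (n - 2) = r := by
    rw [hd, hμ, show n - 1 = n - 2 + 1 by omega, pow_succ, one_div, inv_pow]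
    field_simp
  have hr₁ : (r : ℚ) + 1 < 2 ^ n := by
    exact_mod_cast (Nat.succ_le_of_lt h3).trans_lt n.lt_two_pow_self
  have hden : 0 < 2 * ((n : ℚ) + 1) * (a ^ n - (a - 1) ^ n) :=
    mul_pos (by positivity) (sub_pos.2 (pow_lt_pow_left₀ (by linarith) (by linarith) (by omega)))
  rw [mul_assoc 2 d, hdμ, div_lt_one hden, ← sub_pos, kn_denominator_sub_numerator_eq hna]
  exact mul_pos (by linarith) (sub_pos.2 (mul_sub_one_pow_lt_pow ha₁ ha₂ hr₁))

/-- Let `n ≥ 2` and `a = n/r` with integers `1 < n/2 < r < n`. With `d = r^(n-1)` and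
`μ = 1/r`, one has `k_n(a,d,μ) < 1`, where
`k_n(a,d,μ) = ((2dμ^(n-2)+1)a^(n+1) - (a+n)(a-1)^n - 2dμ^(n-2)(a-1)^(n+1)) /
(2(n+1)(a^n - (a-1)^n))`. -/
theorem stmt_3 (n r : ℕ) (hn : 2 ≤ n)
    (h1 : (1 : ℚ) < (n : ℚ) / 2) (h2 : (n : ℚ) / 2 < r) (h3 : r < n)
    (a d μ : ℚ) (ha : a = (n : ℚ) / r) (hd : d = (r : ℚ) ^ (n - 1)) (hμ : μ = 1 / (r : ℚ)) :
    ((2 * d * μ ^ (n - 2) + 1) * a ^ (n + 1) - (a + n) * (a - 1) ^ n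
        - 2 * d * μ ^ (n - 2) * (a - 1) ^ (n + 1)) /
      (2 * ((n : ℚ) + 1) * (a ^ n - (a - 1) ^ n)) < 1 :=
  stmt_3_general n r h2 h3 a d μ ha hd hμ
end

section
/- Let n, r be integers with 1 < n/2 < r < n and set a = n/r. Then (n+1)(a^n - (a-1)^n) > (n+1-a)a^n + (a-1)^{n+1}. -/
/-!
Writing `a = n / r`, the difference of the two sides is `a * (a ^ n - (r + 1) * (a - 1) ^ n)`,
which after clearing denominators has the sign of `n ^ n - (r + 1) * (n - r) ^ n`. With
`k = n - r` we have `2 * k < n`, so `(r + 1) * k ^ n ≤ (n + 1) * k ^ n ≤ (2 * k) ^ n < n ^ n`.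
-/

theorem Nat.succ_mul_pow_lt_pow_self {k n : ℕ} (h : 2 * k < n) : (n + 1) * k ^ n < n ^ n :=
  calc (n + 1) * k ^ n ≤ 2 ^ n * k ^ n := Nat.mul_le_mul_right _ n.lt_two_pow_self
    _ = (2 * k) ^ n := (mul_pow 2 k n).symm
    _ < n ^ n := Nat.pow_lt_pow_left h (by omega)

theorem mul_pow_add_pow_succ_lt_of_pow_lt {R : Type*} [CommRing R] [PartialOrder R] [IsStrictOrderedRing R]
    {x a r : R} (n : ℕ) (ha : 0 < a) (hx : x + a = a * (r + 1))
    (h : (r + 1) * (a - 1) ^ n < a ^ n) :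
    (x + 1 - a) * a ^ n + (a - 1) ^ (n + 1) < (x + 1) * (a ^ n - (a - 1) ^ n) := by
  have hdiff : (x + 1) * (a ^ n - (a - 1) ^ n) - ((x + 1 - a) * a ^ n + (a - 1) ^ (n + 1)) =
      a * (a ^ n - (r + 1) * (a - 1) ^ n) := by
    linear_combination (-(a - 1) ^ n) * hx
  exact sub_pos.mp (hdiff ▸ mul_pos ha (sub_pos.mpr h))

theorem stmt_4_general (n r : ℕ) (h2 : (n : ℚ) / 2 < r) (h3 : r < n) :
    ((n : ℚ) + 1 - (n : ℚ) / r) * ((n : ℚ) / r) ^ n + ((n : ℚ) / r - 1) ^ (n + 1) <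
      ((n : ℚ) + 1) * (((n : ℚ) / r) ^ n - ((n : ℚ) / r - 1) ^ n) := by
  have hr : (0 : ℚ) < r := by linarith [(n.cast_nonneg : (0 : ℚ) ≤ n)]
  have h2r : n < 2 * r := by exact_mod_cast (by linarith : (n : ℚ) < 2 * r)
  have hnat : (r + 1) * (n - r) ^ n < n ^ n :=
    (Nat.mul_le_mul_right _ (by omega)).trans_lt (Nat.succ_mul_pow_lt_pow_self (by omega))
  have hkey : ((r : ℚ) + 1) * ((n : ℚ) - r) ^ n < (n : ℚ) ^ n := by
    have := (Nat.cast_lt (α := ℚ)).mpr hnat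
    push_cast [Nat.cast_sub h3.le] at this
    exact this
  have ha : (0 : ℚ) < n / r := div_pos (hr.trans (by exact_mod_cast h3)) hr
  refine mul_pow_add_pow_succ_lt_of_pow_lt (r := (r : ℚ)) n ha (by field_simp) ?_
  rw [div_sub_one hr.ne', div_pow, div_pow, ← mul_div_assoc,
    div_lt_div_iff_of_pos_right (by positivity)]
  exact hkey

/-- For integers `n, r` with `1 < n/2 < r < n` and `a = n/r`, one has
`(n+1)(a^n - (a-1)^n) > (n+1-a)a^n + (a-1)^(n+1)`. -/
theorem stmt_4 (n r : ℕ) (h1 : (1 : ℚ) < (n : ℚ) / 2) (h2 : (n : ℚ) / 2 < r) (h3 : r < n) :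
    ((n : ℚ) + 1 - (n : ℚ) / r) * ((n : ℚ) / r) ^ n + ((n : ℚ) / r - 1) ^ (n + 1) <
      ((n : ℚ) + 1) * (((n : ℚ) / r) ^ n - ((n : ℚ) / r - 1) ^ n) :=
  stmt_4_general n r h2 h3
end

section
/- GIT stability of (2,2)-curves: a curve C ⊂ P^1×P^1 of bidegree (2,2) given by f = Σ a_{ij} x^{2-i}y^i u^{2-j}v^j is not GIT stable for the PGL_2×PGL_2 action if and only if C is singular; in particular, if a_{00} = a_{10} = a_{01} = 0 (C singular at ([1:0],[1:0])), then the diagonal one-parameter subgroup λ = (1,-1,1,-1) satisfies μ(f,λ) ≤ 0, where μ(f,λ) = max{ r_0(2-2i) + r_1(2-2j) : a_{ij} ≠ 0 } for λ = (r_0,-r_0,r_1,-r_1). -/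
open MvPolynomial

/-- Linear substitution on `ℂ[x,y,u,v]` induced by `(A,B) ∈ SL₂ × SL₂`: `A` acts on the
variables `x = X 0, y = X 1` and `B` acts on `u = X 2, v = X 3`. -/
noncomputable def biSubst (A B : Matrix (Fin 2) (Fin 2) ℂ) :
    MvPolynomial (Fin 4) ℂ →ₐ[ℂ] MvPolynomial (Fin 4) ℂ :=
  aeval ![C (A 0 0) * X 0 + C (A 0 1) * X 1,
          C (A 1 0) * X 0 + C (A 1 1) * X 1,
          C (B 0 0) * X 2 + C (B 0 1) * X 3,
          C (B 1 0) * X 2 + C (B 1 1) * X 3]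

/-- The bidegree `(2,2)` form `f = ∑ aᵢⱼ x^{2-i} y^i u^{2-j} v^j`. -/
noncomputable def form22 (a : Fin 3 → Fin 3 → ℂ) : MvPolynomial (Fin 4) ℂ :=
  ∑ i : Fin 3, ∑ j : Fin 3,
    C (a i j) * X 0 ^ (2 - (i : ℕ)) * X 1 ^ (i : ℕ) * X 2 ^ (2 - (j : ℕ)) * X 3 ^ (j : ℕ)

/-- The coefficient of the monomial `x^{2-i} y^i u^{2-j} v^j` in `f`. -/
noncomputable def coeff22 (f : MvPolynomial (Fin 4) ℂ) (i j : Fin 3) : ℂ :=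
  coeff (Finsupp.single (0 : Fin 4) (2 - (i : ℕ)) + Finsupp.single (1 : Fin 4) (i : ℕ) +
    Finsupp.single (2 : Fin 4) (2 - (j : ℕ)) + Finsupp.single (3 : Fin 4) (j : ℕ)) f

/-- The Hilbert–Mumford weight of the monomial `x^{2-i} y^i u^{2-j} v^j` under the diagonal
one-parameter subgroup `λ = (r₀, -r₀, r₁, -r₁)`. -/
def hmWeight (r₀ r₁ : ℤ) (i j : Fin 3) : ℤ :=
  r₀ * (2 - 2 * (i : ℤ)) + r₁ * (2 - 2 * (j : ℤ))

/-- GIT stability of the `(2,2)`-curve `{f = 0}` for the `PGL₂ × PGL₂`-action, via the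
Hilbert–Mumford criterion: every one-parameter subgroup is conjugate to a diagonal one
`λ = (r₀, -r₀, r₁, -r₁)` with `r₁ ≥ r₀ ≥ 0`, `r₁ > 0`, so stability says that for every
group translate of `f` and every such `λ` the weight `μ(f, λ) > 0`, i.e. some nonzero
coefficient has positive Hilbert–Mumford weight. -/
def GITStable22 (a : Fin 3 → Fin 3 → ℂ) : Prop :=
  ∀ g : Matrix.SpecialLinearGroup (Fin 2) ℂ × Matrix.SpecialLinearGroup (Fin 2) ℂ,
    ∀ r₀ r₁ : ℤ, 0 ≤ r₀ → r₀ ≤ r₁ → 0 < r₁ →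
      ∃ i j : Fin 3,
        coeff22 (biSubst (g.1 : Matrix (Fin 2) (Fin 2) ℂ)
          (g.2 : Matrix (Fin 2) (Fin 2) ℂ) (form22 a)) i j ≠ 0 ∧
        0 < hmWeight r₀ r₁ i j

/-- The curve `{f = 0} ⊂ ℙ¹ × ℙ¹` is singular: at some point (given by nonzero affine
representatives `(x,y)` and `(u,v)`) the form and all its partial derivatives vanish. -/
def Singular22 (a : Fin 3 → Fin 3 → ℂ) : Prop :=
  ∃ x y u v : ℂ, ¬(x = 0 ∧ y = 0) ∧ ¬(u = 0 ∧ v = 0) ∧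
    eval ![x, y, u, v] (form22 a) = 0 ∧
    ∀ s : Fin 4, eval ![x, y, u, v] (pderiv s (form22 a)) = 0

/-!
By the Hilbert–Mumford criterion, `f` fails to be stable iff some translate of `f` has all
coefficients of positive weight zero for some diagonal `λ = (r₀, r₁)`. For `r₀ > 0` this kills
`a₀₀, a₁₀, a₀₁`, which is exactly singularity at `([1:0],[1:0])`; for `r₀ = 0` it kills every
`aᵢ₀`, so `v ∣ f` and the line `v = 0` meets the residual curve at a singular point. Conversely,
`SL₂ × SL₂` moves any singular point to `([1:0],[1:0])`, where `λ = (1, 1)` destabilizes.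
Singular points are transported by the substitution through the chain rule.
-/

namespace MvPolynomial
variable {R σ τ : Type*} [CommRing R]

theorem pderiv_aeval [Fintype σ] (g : σ → MvPolynomial τ R) (f : MvPolynomial σ R) (s : τ) :
    pderiv s (aeval g f) = ∑ j, aeval g (pderiv j f) * pderiv s (g j) := by
  classical
  induction f using MvPolynomial.induction_on with
  | C r => simp
  | add p q hp hq => simp only [map_add, hp, hq, add_mul, Finset.sum_add_distrib]
  | mul_X p n hp =>
    simp only [Derivation.leibniz, pderiv_X, smul_eq_mul, map_add, map_mul, aeval_X, hp,
      add_mul, Finset.sum_add_distrib, Pi.single_apply, mul_ite, mul_one, mul_zero, Finset.mul_sum,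
      mul_assoc]
    simp only [apply_ite (aeval g), map_zero, ite_mul, zero_mul, Finset.sum_ite_eq,
      Finset.mem_univ, if_true]

theorem eval_algHom (φ : MvPolynomial σ R →ₐ[R] MvPolynomial τ R) (p : τ → R)
    (f : MvPolynomial σ R) : eval p (φ f) = eval (fun j => eval p (φ (X j))) f := by
  conv_lhs => rw [aeval_unique φ]
  exact eval₂Hom_bind₁ _ p _ f

def IsSingularPoint (f : MvPolynomial σ R) (p : σ → R) : Prop :=
  eval p f = 0 ∧ ∀ s, eval p (pderiv s f) = 0

theorem IsSingularPoint.map [Fintype σ] {f : MvPolynomial σ R}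
    {φ : MvPolynomial σ R →ₐ[R] MvPolynomial τ R} {p : τ → R}
    (h : IsSingularPoint f fun j => eval p (φ (X j))) : IsSingularPoint (φ f) p := by
  refine ⟨by rw [eval_algHom]; exact h.1, fun s => ?_⟩
  rw [aeval_unique φ, pderiv_aeval, ← aeval_unique φ, map_sum]
  exact Finset.sum_eq_zero fun j _ => by rw [map_mul, eval_algHom, h.2, zero_mul]

end MvPolynomial

theorem Matrix.SpecialLinearGroup.exists_col_eq_of_ne_zero {K : Type*} [Field K] {x y : K}
    (hxy : ¬(x = 0 ∧ y = 0)) :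
    ∃ A : Matrix.SpecialLinearGroup (Fin 2) K, A 0 0 = x ∧ A 1 0 = y := by
  by_cases hx : x = 0
  · have hy : y ≠ 0 := fun hy => hxy ⟨hx, hy⟩
    exact ⟨⟨!![0, -y⁻¹; y, 0], by simp [Matrix.det_fin_two_of, hy]⟩, by simp [hx], rfl⟩
  · exact ⟨⟨!![x, 0; y, x⁻¹], by simp [Matrix.det_fin_two_of, hx]⟩, rfl, rfl⟩

theorem not_and_fin_two_mulVec_eq_zero {K : Type*} [Field K] {A : Matrix (Fin 2) (Fin 2) K}
    (hA : IsUnit A.det) {s t : K} (hst : ¬(s = 0 ∧ t = 0)) :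
    ¬(A 0 0 * s + A 0 1 * t = 0 ∧ A 1 0 * s + A 1 1 * t = 0) := by
  rintro ⟨h₀, h₁⟩
  have hv := Matrix.eq_zero_of_mulVec_eq_zero hA.ne_zero (v := ![s, t]) <| by
    ext i; fin_cases i <;> simp [Matrix.mulVec, dotProduct, h₀, h₁]
  exact hst ⟨congrFun hv 0, congrFun hv 1⟩

theorem exists_ne_zero_binary_quadratic_eq_zero {K : Type*} [Field K] [IsAlgClosed K]
    (α β γ : K) : ∃ s t : K, ¬(s = 0 ∧ t = 0) ∧ α * s ^ 2 + β * s * t + γ * t ^ 2 = 0 := by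
  by_cases hα : α = 0
  · exact ⟨1, 0, by simp, by simp [hα]⟩
  · obtain ⟨s, hs⟩ := IsAlgClosed.exists_root
      (Polynomial.C α * Polynomial.X ^ 2 + Polynomial.C β * Polynomial.X + Polynomial.C γ)
      (by rw [Polynomial.degree_quadratic hα]; decide)
    refine ⟨s, 1, by simp, ?_⟩
    simpa using hs

section biSubst

variable (A B A' B' : Matrix (Fin 2) (Fin 2) ℂ)

theorem biSubst_biSubst (f : MvPolynomial (Fin 4) ℂ) :
    biSubst A B (biSubst A' B' f) = biSubst (A' * A) (B' * B) f := by
  rw [← AlgHom.comp_apply]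
  congr 1
  refine algHom_ext fun i => ?_
  fin_cases i <;> simp [biSubst, Matrix.mul_apply, Fin.sum_univ_two] <;> ring

theorem biSubst_one : biSubst 1 1 = AlgHom.id ℂ (MvPolynomial (Fin 4) ℂ) :=
  algHom_ext fun i => by fin_cases i <;> simp [biSubst]

theorem eval_biSubst_X (p : Fin 4 → ℂ) :
    (fun i => eval p (biSubst A B (X i))) = ![A 0 0 * p 0 + A 0 1 * p 1,
      A 1 0 * p 0 + A 1 1 * p 1, B 0 0 * p 2 + B 0 1 * p 3, B 1 0 * p 2 + B 1 1 * p 3] := by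
  funext i; fin_cases i <;> simp [biSubst]

variable {A B}

theorem IsSingularPoint.of_biSubst (hA : IsUnit A.det) (hB : IsUnit B.det)
    {f : MvPolynomial (Fin 4) ℂ} {p : Fin 4 → ℂ} (h : IsSingularPoint (biSubst A B f) p) :
    IsSingularPoint f fun i => eval p (biSubst A B (X i)) := by
  have hf : biSubst A⁻¹ B⁻¹ (biSubst A B f) = f := by
    rw [biSubst_biSubst, A.mul_nonsing_inv hA, B.mul_nonsing_inv hB, biSubst_one]; rfl
  have hp : (fun j => eval (fun i => eval p (biSubst A B (X i))) (biSubst A⁻¹ B⁻¹ (X j))) = p := by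
    funext j
    rw [← eval_algHom (biSubst A B), biSubst_biSubst, A.nonsing_inv_mul hA, B.nonsing_inv_mul hB,
      biSubst_one, AlgHom.id_apply, eval_X]
  rw [← hf]
  refine IsSingularPoint.map ?_
  rwa [hp]

end biSubst

noncomputable def exponent22 (i j : Fin 3) : Fin 4 →₀ ℕ :=
  Finsupp.single 0 (2 - (i : ℕ)) + Finsupp.single 1 (i : ℕ) + Finsupp.single 2 (2 - (j : ℕ)) +
    Finsupp.single 3 (j : ℕ)

theorem exponent22_inj {i j k l : Fin 3} : exponent22 i j = exponent22 k l ↔ i = k ∧ j = l := by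
  refine ⟨fun h => ⟨Fin.ext ?_, Fin.ext ?_⟩, fun ⟨hi, hj⟩ => hi ▸ hj ▸ rfl⟩
  · simpa [exponent22] using DFunLike.congr_fun h 1
  · simpa [exponent22] using DFunLike.congr_fun h 3

theorem form22_eq_sum_monomial (a : Fin 3 → Fin 3 → ℂ) :
    form22 a = ∑ i, ∑ j, monomial (exponent22 i j) (a i j) := by
  simp only [form22, exponent22, X_pow_eq_monomial, C_mul_monomial, monomial_mul, mul_one]

theorem coeff22_form22 (a : Fin 3 → Fin 3 → ℂ) (i j : Fin 3) : coeff22 (form22 a) i j = a i j := by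
  change coeff (exponent22 i j) _ = _
  simp [form22_eq_sum_monomial, coeff_sum, coeff_monomial, exponent22_inj, ite_and]

/-- `symSqMatrix A k i` is the coefficient of `x^(2-k) y^k` in
`(A₀₀ x + A₀₁ y)^(2-i) (A₁₀ x + A₁₁ y)^i`. -/
def symSqMatrix (A : Matrix (Fin 2) (Fin 2) ℂ) : Fin 3 → Fin 3 → ℂ :=
  ![![A 0 0 ^ 2, A 0 0 * A 1 0, A 1 0 ^ 2],
    ![2 * A 0 0 * A 0 1, A 0 0 * A 1 1 + A 0 1 * A 1 0, 2 * A 1 0 * A 1 1],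
    ![A 0 1 ^ 2, A 0 1 * A 1 1, A 1 1 ^ 2]]

def biSubstCoeff (A B : Matrix (Fin 2) (Fin 2) ℂ) (a : Fin 3 → Fin 3 → ℂ) : Fin 3 → Fin 3 → ℂ :=
  fun k l => ∑ i : Fin 3, ∑ j : Fin 3, a i j * symSqMatrix A k i * symSqMatrix B l j

theorem biSubst_form22 (A B : Matrix (Fin 2) (Fin 2) ℂ) (a : Fin 3 → Fin 3 → ℂ) :
    biSubst A B (form22 a) = form22 (biSubstCoeff A B a) := by
  simp only [biSubst, form22, biSubstCoeff, symSqMatrix, Fin.sum_univ_three, map_add, map_mul,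
    map_pow, aeval_X, aeval_C, algebraMap_eq, Matrix.cons_val_zero, Matrix.cons_val_one,
    Matrix.head_cons, Fin.val_zero, Fin.val_one, Fin.val_two, pow_zero, pow_one,
    Matrix.cons_val_two, Matrix.tail_cons, Matrix.cons_val_three, map_ofNat, map_one]
  ring

theorem isSingularPoint_form22_one_zero_one_zero_iff (a : Fin 3 → Fin 3 → ℂ) :
    IsSingularPoint (form22 a) ![1, 0, 1, 0] ↔ a 0 0 = 0 ∧ a 1 0 = 0 ∧ a 0 1 = 0 := by
  simp +contextual [IsSingularPoint, Fin.forall_fin_succ, form22, Fin.sum_univ_three, pderiv_X]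

theorem isSingularPoint_form22_of_forall_coeff_eq_zero {a : Fin 3 → Fin 3 → ℂ}
    (h : ∀ i, a i 0 = 0) {s t : ℂ} (hq : a 0 1 * s ^ 2 + a 1 1 * s * t + a 2 1 * t ^ 2 = 0) :
    IsSingularPoint (form22 a) ![s, t, 1, 0] := by
  simpa [IsSingularPoint, Fin.forall_fin_succ, form22, Fin.sum_univ_three, pderiv_X, h] using hq

theorem hmWeight_one_one_nonpos {a : Fin 3 → Fin 3 → ℂ} (h : a 0 0 = 0 ∧ a 1 0 = 0 ∧ a 0 1 = 0)
    {i j : Fin 3} (hij : a i j ≠ 0) : hmWeight 1 1 i j ≤ 0 := by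
  obtain ⟨h₀₀, h₁₀, h₀₁⟩ := h
  fin_cases i <;> fin_cases j <;> simp_all [hmWeight]

theorem singular22_of_coeff_eq_zero_of_hmWeight_pos {a : Fin 3 → Fin 3 → ℂ} {r₀ r₁ : ℤ}
    (hr₀ : 0 ≤ r₀) (hr₁ : 0 < r₁) (h : ∀ i j, 0 < hmWeight r₀ r₁ i j → a i j = 0) :
    Singular22 a := by
  rcases hr₀.eq_or_lt with rfl | hr₀
  · obtain ⟨s, t, hst, hq⟩ := exists_ne_zero_binary_quadratic_eq_zero (a 0 1) (a 1 1) (a 2 1)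
    have hv : ∀ i, a i 0 = 0 := fun i => h i 0 (by simp [hmWeight]; omega)
    exact ⟨s, t, 1, 0, hst, by simp, isSingularPoint_form22_of_forall_coeff_eq_zero hv hq⟩
  · have hsing := (isSingularPoint_form22_one_zero_one_zero_iff a).2
      ⟨h 0 0 (by simp [hmWeight]; omega), h 1 0 (by simp [hmWeight]; omega),
        h 0 1 (by simp [hmWeight]; omega)⟩
    exact ⟨1, 0, 1, 0, by simp, by simp, hsing⟩

theorem Singular22.of_biSubstCoeff {A B : Matrix (Fin 2) (Fin 2) ℂ} (hA : IsUnit A.det)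
    (hB : IsUnit B.det) {a : Fin 3 → Fin 3 → ℂ} (h : Singular22 (biSubstCoeff A B a)) :
    Singular22 a := by
  obtain ⟨s, t, w, z, hst, hwz, hsing⟩ := h
  have := IsSingularPoint.of_biSubst hA hB (f := form22 a) (p := ![s, t, w, z])
    (by rw [biSubst_form22]; exact hsing)
  rw [eval_biSubst_X] at this
  exact ⟨_, _, _, _, not_and_fin_two_mulVec_eq_zero hA hst, not_and_fin_two_mulVec_eq_zero hB hwz,
    this⟩

theorem singular22_of_not_gitStable22 {a : Fin 3 → Fin 3 → ℂ} (h : ¬GITStable22 a) :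
    Singular22 a := by
  simp only [GITStable22, not_forall, not_exists, not_and, not_lt] at h
  obtain ⟨⟨A, B⟩, r₀, r₁, hr₀, -, hr₁, hw⟩ := h
  refine Singular22.of_biSubstCoeff (A := A) (B := B) (by simp) (by simp) ?_
  refine singular22_of_coeff_eq_zero_of_hmWeight_pos hr₀ hr₁ fun i j hpos => ?_
  by_contra hc
  exact (hw i j (by rwa [biSubst_form22, coeff22_form22])).not_gt hpos

theorem not_gitStable22_of_singular22 {a : Fin 3 → Fin 3 → ℂ} (h : Singular22 a) :
    ¬GITStable22 a := by
  obtain ⟨x, y, u, v, hxy, huv, hsing⟩ := h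
  obtain ⟨A, hAx, hAy⟩ := Matrix.SpecialLinearGroup.exists_col_eq_of_ne_zero hxy
  obtain ⟨B, hBu, hBv⟩ := Matrix.SpecialLinearGroup.exists_col_eq_of_ne_zero huv
  have hcorner : biSubstCoeff A B a 0 0 = 0 ∧ biSubstCoeff A B a 1 0 = 0 ∧
      biSubstCoeff A B a 0 1 = 0 := by
    rw [← isSingularPoint_form22_one_zero_one_zero_iff, ← biSubst_form22]
    refine IsSingularPoint.map ?_
    rw [eval_biSubst_X]
    have hsing' : IsSingularPoint (form22 a) ![x, y, u, v] := hsing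
    simpa [hAx, hAy, hBu, hBv] using hsing'
  intro hstab
  obtain ⟨i, j, hc, hw⟩ := hstab (A, B) 1 1 zero_le_one le_rfl one_pos
  rw [biSubst_form22, coeff22_form22] at hc
  exact hw.not_ge (hmWeight_one_one_nonpos hcorner hc)

theorem stmt_19_general (a : Fin 3 → Fin 3 → ℂ) :
    (¬ GITStable22 a ↔ Singular22 a) ∧
      ((a 0 0 = 0 ∧ a 1 0 = 0 ∧ a 0 1 = 0) →
        ∀ i j : Fin 3, coeff22 (form22 a) i j ≠ 0 → hmWeight 1 1 i j ≤ 0) :=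
  ⟨⟨singular22_of_not_gitStable22, not_gitStable22_of_singular22⟩,
    fun h i j hc => hmWeight_one_one_nonpos h (by rwa [coeff22_form22] at hc)⟩

/-- A `(2,2)`-curve `C ⊂ ℙ¹×ℙ¹` given by `f = ∑ aᵢⱼ x^{2-i} y^i u^{2-j} v^j ≠ 0` is not GIT
stable for the `PGL₂ × PGL₂`-action if and only if `C` is singular; in particular, if
`a₀₀ = a₁₀ = a₀₁ = 0` (so `C` is singular at `([1:0],[1:0])`), then the diagonal
one-parameter subgroup `λ = (1,-1,1,-1)` satisfies `μ(f,λ) ≤ 0`, i.e. every nonzero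
coefficient of `f` has nonpositive Hilbert–Mumford weight for `r₀ = r₁ = 1`. -/
theorem stmt_19 (a : Fin 3 → Fin 3 → ℂ) (ha : form22 a ≠ 0) :
    (¬ GITStable22 a ↔ Singular22 a) ∧
      ((a 0 0 = 0 ∧ a 1 0 = 0 ∧ a 0 1 = 0) →
        ∀ i j : Fin 3, coeff22 (form22 a) i j ≠ 0 → hmWeight 1 1 i j ≤ 0) :=
  stmt_19_general a
end
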